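/- Let g be a symmetric invertible real n×n matrix and let E and F be two tetrads for g (i.e. Eᵀ g E = η and Fᵀ g F = η). Then the matrix L := η Eᵀ g F is a Lorentz matrix (Lᵀ η L = η) and satisfies F = E · L. In particular, any two tetrads at a point are connected by a Lorentz transformation. -/
import Mathlib


open Matrix

/-- The `n × n` Minkowski matrix `diag(1, -1, …, -1)`. -/
noncomputable def eta (n : ℕ) : Matrix (Fin n) (Fin n) ℝ :=
  Matrix.diagonal (fun i => if (i : ℕ) = 0 then (1 : ℝ) else -1)

lemma eta_sq (n : ℕ) : eta n * eta n = 1 := by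
  ext i j
  by_cases h : i = j
  · subst h
    by_cases h2 : (i : ℕ) = 0 <;>
      simp [eta, Matrix.diagonal_apply, Matrix.one_apply, h2]
  · simp [eta, Matrix.diagonal_apply, Matrix.one_apply, h]

lemma eta_symm (n : ℕ) : (eta n)ᵀ = eta n := by
  simp [eta, Matrix.diagonal_transpose]

/-- Any two tetrads `E`, `F` for the same symmetric invertible metric `g` are connected
by the Lorentz transformation `L := η Eᵀ g F`: one has `Lᵀ η L = η` and `F = E * L`. -/
theorem tetrads_related_by_Lorentz (n : ℕ) (hn : 1 ≤ n)
    (g E F : Matrix (Fin n) (Fin n) ℝ)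
    (hg_symm : gᵀ = g) (hg_inv : IsUnit g)
    (hE : Eᵀ * g * E = eta n) (hF : Fᵀ * g * F = eta n) :
    (eta n * Eᵀ * g * F)ᵀ * eta n * (eta n * Eᵀ * g * F) = eta n ∧
      F = E * (eta n * Eᵀ * g * F) := by
  have h1 : Eᵀ * (g * (E * eta n)) = 1 := by
    have := congrArg (· * eta n) hE
    simpa [Matrix.mul_assoc, eta_sq n] using this
  have h2 : g * (E * eta n) * Eᵀ = 1 := mul_eq_one_comm.mp h1
  have h3 : E * eta n * Eᵀ * g = 1 := by
    have : g * (E * eta n * Eᵀ) = 1 := by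
      rw [← h2]; simp [Matrix.mul_assoc]
    exact mul_eq_one_comm.mp this
  constructor
  · have : (eta n * Eᵀ * g * F)ᵀ * eta n * (eta n * Eᵀ * g * F)
        = Fᵀ * g * ((E * eta n * Eᵀ * g) * F) := by
      simp only [Matrix.transpose_mul, eta_symm, hg_symm, Matrix.transpose_transpose,
        Matrix.mul_assoc]
      rw [show eta n * (eta n * (eta n * (Eᵀ * (g * F)))) =
        (eta n * eta n) * (eta n * (Eᵀ * (g * F))) by simp [Matrix.mul_assoc],
        eta_sq n, one_mul]
    rw [this, h3, one_mul, hF]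
  · rw [show E * (eta n * Eᵀ * g * F) = (E * eta n * Eᵀ * g) * F by simp [Matrix.mul_assoc],
      h3, one_mul]
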